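/- arXiv:2510.05639 — 2 statements merged into one kernel-verified Lean document; each statement's English description precedes it below -/
import Mathlib

section
/- Let Y be a finite-dimensional real normed vector space and μ, ν ∈ P(Y). Then d(μ,ν) = sup{∫ γ dμ − ∫ γ dν : γ : Y → ℝ continuous with compact support, Lip(γ) ≤ 1}; and if moreover ∫|y| dμ(y) < ∞ and ∫|y| dν(y) < ∞, then d(μ,ν) also equals sup{∫ γ dμ − ∫ γ dν : γ : Y → ℝ, γ(0) = 0, Lip(γ) ≤ 1}. -/
open MeasureTheory Topology

noncomputable section

/-- The set of probability Radon measures over `Y`. -/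
def ProbRadon (Y : Type*) [TopologicalSpace Y] [MeasurableSpace Y] : Type _ :=
  {μ : Measure Y // IsProbabilityMeasure μ ∧ μ.Regular}

/-- The test function space `E(Y) = ⋃_{0 ≤ s < ∞} E_s(Y)`: continuously differentiable
`γ : Y → ℝ` with `γ 0 = 0` whose derivative has support in some closed ball `B(0, s)`. -/
def ESp (Y : Type*) [NormedAddCommGroup Y] [NormedSpace ℝ Y] : Set (Y → ℝ) :=
  {γ | ContDiff ℝ 1 γ ∧ γ 0 = 0 ∧
    ∃ s : ℝ, 0 ≤ s ∧ tsupport (fun y => fderiv ℝ γ y) ⊆ Metric.closedBall 0 s}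

/-- The pseudo-metric `d` on measures over `Y`, with values in `[0, ∞]`:
`d(μ, ν) = sup {∫ γ dμ − ∫ γ dν : γ ∈ E(Y), sup ‖Dγ‖ ≤ 1}`. -/
def dP (Y : Type*) [NormedAddCommGroup Y] [NormedSpace ℝ Y] [MeasurableSpace Y]
    (μ ν : Measure Y) : ENNReal :=
  ⨆ γ : {γ : Y → ℝ // γ ∈ ESp Y ∧ ∀ y, ‖fderiv ℝ γ y‖ ≤ 1},
    ENNReal.ofReal ((∫ y, γ.1 y ∂μ) - ∫ y, γ.1 y ∂ν)

section Aux

variable {Y : Type*} [NormedAddCommGroup Y] [NormedSpace ℝ Y]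

/-- Truncation of a function to a compactly supported one. -/
private def trunc (R : ℝ) (γ : Y → ℝ) : Y → ℝ :=
  fun y => max (min (γ y) (max (R - ‖y‖) 0)) (-(max (R - ‖y‖) 0))

private lemma trunc_lipschitz (R : ℝ) {γ : Y → ℝ} (hlip : LipschitzWith 1 γ) :
    LipschitzWith 1 (trunc R γ) := by
  have hp : LipschitzWith 1 (fun y : Y => max (R - ‖y‖) 0) := by
    have h0 : LipschitzWith 1 (fun y : Y => R - ‖y‖) := by
      simpa using (LipschitzWith.const (α := Y) R).sub lipschitzWith_one_norm
    simpa using h0.max_const 0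
  have h1 : LipschitzWith 1 (fun y : Y => min (γ y) (max (R - ‖y‖) 0)) := by
    simpa using hlip.min hp
  have h2 : LipschitzWith 1 (fun y : Y => -(max (R - ‖y‖) 0)) := hp.neg
  have h3 := h1.max h2
  rw [max_self] at h3
  exact h3

private lemma trunc_zero_of_le (R : ℝ) (γ : Y → ℝ) {y : Y} (hy : R ≤ ‖y‖) :
    trunc R γ y = 0 := by
  have h0 : max (R - ‖y‖) 0 = 0 := max_eq_right (by linarith)
  simp only [trunc, h0, neg_zero]
  exact max_eq_right (min_le_right _ _)

private lemma trunc_abs_le (R : ℝ) (γ : Y → ℝ) (y : Y) : |trunc R γ y| ≤ |γ y| := by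
  have hp : 0 ≤ max (R - ‖y‖) 0 := le_max_right _ _
  rw [abs_le]
  constructor
  · exact le_trans (le_min (neg_abs_le _)
      (le_trans (neg_nonpos_of_nonneg (abs_nonneg _)) hp)) (le_max_left _ _)
  · exact max_le (le_trans (min_le_left _ _) (le_abs_self _))
      (le_trans (neg_nonpos_of_nonneg hp) (abs_nonneg _))

private lemma trunc_eq_of_le {R : ℝ} (γ : Y → ℝ) {y : Y} (hy : ‖y‖ + |γ y| ≤ R) :
    trunc R γ y = γ y := by
  have h1 : |γ y| ≤ R - ‖y‖ := by linarith
  have h0 : max (R - ‖y‖) 0 = R - ‖y‖ := max_eq_left (le_trans (abs_nonneg _) h1)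
  simp only [trunc, h0]
  rw [min_eq_left (le_trans (le_abs_self _) h1),
    max_eq_left (le_trans (neg_le_neg h1) (neg_abs_le _))]

/-- Any `1`-Lipschitz function which is integrable against both probability measures has its
integral difference dominated by the supremum over compactly supported Lipschitz functions. -/
private lemma key_trunc [FiniteDimensional ℝ Y] [MeasurableSpace Y] [OpensMeasurableSpace Y]
    {μ ν : Measure Y} [IsProbabilityMeasure μ] [IsProbabilityMeasure ν]
    {γ : Y → ℝ} (hlip : LipschitzWith 1 γ) (hμ : Integrable γ μ) (hν : Integrable γ ν) :
    ENNReal.ofReal ((∫ y, γ y ∂μ) - ∫ y, γ y ∂ν) ≤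
      ⨆ g : {g : Y → ℝ // Continuous g ∧ HasCompactSupport g ∧ LipschitzWith 1 g},
        ENNReal.ofReal ((∫ y, g.1 y ∂μ) - ∫ y, g.1 y ∂ν) := by
  have hconv : ∀ (m : Measure Y), IsProbabilityMeasure m → Integrable γ m →
      Filter.Tendsto (fun n : ℕ => ∫ y, trunc (n : ℝ) γ y ∂m) Filter.atTop
        (𝓝 (∫ y, γ y ∂m)) := by
    intro m _ hint
    refine tendsto_integral_of_dominated_convergence (fun y => |γ y|)
      (fun n => ((trunc_lipschitz _ hlip).continuous).aestronglyMeasurable)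
      hint.abs
      (fun n => Filter.Eventually.of_forall fun y => by
        simpa [Real.norm_eq_abs] using trunc_abs_le (n : ℝ) γ y)
      (Filter.Eventually.of_forall fun y => ?_)
    obtain ⟨N, hN⟩ := exists_nat_ge (‖y‖ + |γ y|)
    refine Filter.Tendsto.congr' ?_
      (tendsto_const_nhds : Filter.Tendsto (fun _ : ℕ => γ y) Filter.atTop (𝓝 (γ y)))
    refine Filter.eventually_atTop.2 ⟨N, fun n hn => ?_⟩
    exact (trunc_eq_of_le γ (hN.trans (by exact_mod_cast hn))).symm
  have hT := ((hconv μ inferInstance hμ).sub (hconv ν inferInstance hν))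
  have hT2 : Filter.Tendsto
      (fun n : ℕ => ENNReal.ofReal ((∫ y, trunc (n : ℝ) γ y ∂μ) - ∫ y, trunc (n : ℝ) γ y ∂ν))
      Filter.atTop (𝓝 (ENNReal.ofReal ((∫ y, γ y ∂μ) - ∫ y, γ y ∂ν))) :=
    (ENNReal.continuous_ofReal.continuousAt.tendsto).comp hT
  refine le_of_tendsto hT2 (Filter.Eventually.of_forall fun n => ?_)
  refine le_iSup_of_le ⟨trunc (n : ℝ) γ, (trunc_lipschitz _ hlip).continuous,
    HasCompactSupport.intro (isCompact_closedBall (0 : Y) (n : ℝ)) (fun y hy => ?_),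
    trunc_lipschitz _ hlip⟩ le_rfl
  exact trunc_zero_of_le _ _ (by
    simpa [Metric.mem_closedBall, dist_zero_right] using le_of_not_ge
      (by simpa [Metric.mem_closedBall, dist_zero_right] using hy))

/-- Functions in `ESp` with derivative bounded by `1` are `1`-Lipschitz. -/
private lemma esp_lip {γ : Y → ℝ} (h1 : ContDiff ℝ 1 γ) (hb : ∀ y, ‖fderiv ℝ γ y‖ ≤ 1) :
    LipschitzWith 1 γ :=
  lipschitzWith_of_nnnorm_fderiv_le (h1.differentiable one_ne_zero)
    (fun x => by rw [← NNReal.coe_le_coe]; simpa using hb x)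

/-- Functions in `ESp` with derivative supported in `B(0,s)` are bounded by `s`. -/
private lemma esp_abs_le {γ : Y → ℝ} (h1 : ContDiff ℝ 1 γ) (h0 : γ 0 = 0) {s : ℝ} (hs : 0 ≤ s)
    (hsupp : tsupport (fun y => fderiv ℝ γ y) ⊆ Metric.closedBall 0 s)
    (hlip : LipschitzWith 1 γ) (y : Y) : |γ y| ≤ s := by
  have hyb : ∀ z : Y, |γ z| ≤ ‖z‖ := fun z => by
    have := hlip.dist_le_mul z 0
    simpa [h0, Real.dist_eq, dist_zero_right] using this
  refine le_of_forall_pos_le_add fun ε εpos => ?_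
  by_cases hy : ‖y‖ ≤ s + ε
  · exact (hyb y).trans hy
  push_neg at hy
  have hsε : 0 < s + ε := by linarith
  have hny : 0 < ‖y‖ := lt_trans hsε hy
  set t : ℝ := (s + ε) / ‖y‖ with ht
  have htpos : 0 < t := div_pos hsε hny
  have htle : t ≤ 1 := by
    rw [ht, div_le_one hny]; exact le_of_lt hy
  have htnorm : ‖t • y‖ = s + ε := by
    rw [norm_smul, Real.norm_eq_abs, abs_of_pos htpos, ht, div_mul_cancel₀ _ (ne_of_gt hny)]
  -- on the segment from `t • y` to `y`, the derivative vanishes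
  have hseg : ∀ z ∈ segment ℝ (t • y) y, fderiv ℝ γ z = 0 := by
    intro z hz
    obtain ⟨a, b, ha, hb, hab, rfl⟩ := hz
    have hz' : a • t • y + b • y = (a * t + b) • y := by
      rw [smul_smul, add_smul]
    have hcoef : t ≤ a * t + b := by nlinarith
    have hzn : s < ‖a • t • y + b • y‖ := by
      rw [hz', norm_smul, Real.norm_eq_abs, abs_of_nonneg (by nlinarith)]
      have : (s + ε) ≤ (a * t + b) * ‖y‖ := by
        calc s + ε = t * ‖y‖ := by rw [ht, div_mul_cancel₀ _ (ne_of_gt hny)]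
        _ ≤ (a * t + b) * ‖y‖ := by nlinarith
      linarith
    have hnot : a • t • y + b • y ∉ tsupport (fun y => fderiv ℝ γ y) := by
      intro hmem
      have := hsupp hmem
      rw [Metric.mem_closedBall, dist_zero_right] at this
      linarith
    exact image_eq_zero_of_notMem_tsupport hnot
  have hconst : ‖γ y - γ (t • y)‖ ≤ 0 * ‖y - t • y‖ := by
    refine (convex_segment (t • y) y).norm_image_sub_le_of_norm_hasFDerivWithin_le
      (f' := fun _ => (0 : Y →L[ℝ] ℝ)) (fun z hz => ?_) (fun z _ => by simp)
      (left_mem_segment ℝ (t • y) y) (right_mem_segment ℝ (t • y) y)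
    have hd := (h1.differentiable one_ne_zero z).hasFDerivAt
    rw [hseg z hz] at hd
    exact hd.hasFDerivWithinAt
  rw [zero_mul] at hconst
  have : γ y = γ (t • y) := by
    have := norm_sub_eq_zero_iff.mp (le_antisymm hconst (norm_nonneg _))
    exact this
  rw [this]
  calc |γ (t • y)| ≤ ‖t • y‖ := hyb _
  _ = s + ε := htnorm

private lemma integrable_of_abs_le [MeasurableSpace Y] [OpensMeasurableSpace Y]
    {μ : Measure Y} [IsFiniteMeasure μ] {γ : Y → ℝ} (hc : Continuous γ)
    {C : ℝ} (h : ∀ y, |γ y| ≤ C) : Integrable γ μ :=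
  (integrable_const C).mono' hc.aestronglyMeasurable
    (Filter.Eventually.of_forall fun y => by simpa [Real.norm_eq_abs] using h y)

open Convolution ExistsContDiffBumpBase in
/-- Mollification: the integral difference of a compactly supported `1`-Lipschitz function is
dominated by `dP`. -/
private lemma key_moll [FiniteDimensional ℝ Y] [MeasurableSpace Y] [BorelSpace Y]
    {μ ν : Measure Y} [IsProbabilityMeasure μ] [IsProbabilityMeasure ν]
    {γ : Y → ℝ} (hc : Continuous γ) (hcs : HasCompactSupport γ) (hlip : LipschitzWith 1 γ) :
    ENNReal.ofReal ((∫ y, γ y ∂μ) - ∫ y, γ y ∂ν) ≤ dP Y μ ν := by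
  refine ENNReal.le_of_forall_pos_le_add fun ε εpos _ => ?_
  set e : ℝ := (ε : ℝ) / 2 with he
  have epos : 0 < e := by positivity
  set η : Measure Y := Measure.addHaar with hη
  set φ : Y → ℝ := w e with hφ
  have hφsm : ContDiff ℝ 1 φ := by
    rw [hφ, w_def]
    exact (((u_smooth Y).comp (contDiff_const.smul contDiff_id)).const_smul _).of_le
      (by exact_mod_cast le_top)
  have hφc : HasCompactSupport φ := w_compact_support Y epos
  have hφ0 : ∀ t, 0 ≤ φ t := w_nonneg e
  have hφint1 : ∫ t, φ t ∂η = 1 := w_integral Y epos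
  have hφcont : Continuous φ := hφsm.continuous
  have hφInt : Integrable φ η := hφcont.integrable_of_hasCompactSupport hφc
  have hsuppφ : Function.support φ = Metric.ball 0 e := w_support Y epos
  set g0 : Y → ℝ := φ ⋆[ContinuousLinearMap.lsmul ℝ ℝ, η] γ with hg0
  have hloc : LocallyIntegrable γ η := hc.locallyIntegrable
  have hg0sm : ContDiff ℝ 1 g0 := hφc.contDiff_convolution_left _ hφsm hloc
  have hg0cs : HasCompactSupport g0 := hφc.convolution _ hcs
  have hFint : ∀ x : Y, Integrable (fun t => φ t • γ (x - t)) η := by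
    intro x
    refine Continuous.integrable_of_hasCompactSupport
      (hφcont.smul (hc.comp (continuous_const.sub continuous_id))) (hφc.mono fun t ht => ?_)
    simp only [Function.mem_support] at ht ⊢
    intro hφt
    exact ht (by rw [hφt, zero_smul])
  have hg0def : ∀ x, g0 x = ∫ t, φ t • γ (x - t) ∂η := fun x => by
    rw [hg0, convolution_def]
    simp only [ContinuousLinearMap.lsmul_apply]
  have hg0lip : LipschitzWith 1 g0 := by
    refine LipschitzWith.of_dist_le_mul fun x x' => ?_
    rw [NNReal.coe_one, one_mul, Real.dist_eq, hg0def, hg0def,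
      ← integral_sub (hFint x) (hFint x')]
    calc |∫ t, (φ t • γ (x - t) - φ t • γ (x' - t)) ∂η|
        ≤ ∫ t, ‖φ t • γ (x - t) - φ t • γ (x' - t)‖ ∂η := by
          simpa [Real.norm_eq_abs] using
            norm_integral_le_integral_norm (fun t => φ t • γ (x - t) - φ t • γ (x' - t)) (μ := η)
      _ ≤ ∫ t, φ t * dist x x' ∂η := by
          refine integral_mono ((hFint x).sub (hFint x')).norm (hφInt.mul_const _) fun t => ?_
          rw [← smul_sub, norm_smul, Real.norm_eq_abs, abs_of_nonneg (hφ0 t)]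
          refine mul_le_mul_of_nonneg_left ?_ (hφ0 t)
          have := hlip.dist_le_mul (x - t) (x' - t)
          rw [NNReal.coe_one, one_mul, dist_sub_right] at this
          simpa [Real.dist_eq] using this
      _ = dist x x' := by rw [integral_mul_const, hφint1, one_mul]
  have hg0d : ∀ x, ‖fderiv ℝ g0 x‖ ≤ 1 := fun x => by
    have := (hg0sm.differentiable one_ne_zero x).hasFDerivAt.le_of_lipschitz hg0lip
    simpa using this
  have happrox : ∀ x, |g0 x - γ x| ≤ e := by
    intro x
    have hγconst : ∫ t, φ t • γ x ∂η = γ x := by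
      rw [integral_smul_const, hφint1, one_smul]
    have hint2 : Integrable (fun t => φ t • (γ (x - t) - γ x)) η := by
      simpa [Pi.sub_def, smul_sub, mul_sub] using (hFint x).sub (hφInt.smul_const (γ x))
    have heq : g0 x - γ x = ∫ t, φ t • (γ (x - t) - γ x) ∂η := by
      conv_lhs => rw [hg0def x, ← hγconst]
      rw [← integral_sub (hFint x) (hφInt.smul_const _)]
      simp only [smul_sub]
    rw [heq]
    calc |∫ t, φ t • (γ (x - t) - γ x) ∂η|
        ≤ ∫ t, ‖φ t • (γ (x - t) - γ x)‖ ∂η := by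
          simpa [Real.norm_eq_abs] using
            norm_integral_le_integral_norm (fun t => φ t • (γ (x - t) - γ x)) (μ := η)
      _ ≤ ∫ t, φ t * e ∂η := by
          refine integral_mono hint2.norm (hφInt.mul_const _) fun t => ?_
          rw [norm_smul, Real.norm_eq_abs, abs_of_nonneg (hφ0 t)]
          by_cases ht : φ t = 0
          · simp [ht]
          · refine mul_le_mul_of_nonneg_left ?_ (hφ0 t)
            have htmem : t ∈ Metric.ball (0 : Y) e := by
              rw [← hsuppφ]; exact Function.mem_support.2 ht
            rw [Metric.mem_ball, dist_zero_right] at htmem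
            have := hlip.dist_le_mul (x - t) x
            rw [NNReal.coe_one, one_mul] at this
            have hd : dist (x - t) x = ‖t‖ := by
              rw [dist_eq_norm]; simp
            rw [hd] at this
            calc ‖γ (x - t) - γ x‖ = dist (γ (x - t)) (γ x) := by rw [Real.dist_eq]; rfl
            _ ≤ ‖t‖ := this
            _ ≤ e := le_of_lt htmem
      _ = e := by rw [integral_mul_const, hφint1, one_mul]
  have key : ∀ (m : Measure Y), IsProbabilityMeasure m →
      Integrable γ m ∧ Integrable g0 m ∧ |(∫ y, g0 y ∂m) - ∫ y, γ y ∂m| ≤ e := by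
    intro m _
    have hγi : Integrable γ m := hc.integrable_of_hasCompactSupport hcs
    have hg0i : Integrable g0 m := hg0sm.continuous.integrable_of_hasCompactSupport hg0cs
    refine ⟨hγi, hg0i, ?_⟩
    rw [← integral_sub hg0i hγi]
    calc |∫ y, (g0 y - γ y) ∂m| ≤ ∫ y, ‖g0 y - γ y‖ ∂m := by
          simpa [Real.norm_eq_abs] using
            norm_integral_le_integral_norm (fun y => g0 y - γ y) (μ := m)
      _ ≤ ∫ _, e ∂m := integral_mono (hg0i.sub hγi).norm (integrable_const e)
            (fun y => by simpa [Real.norm_eq_abs] using happrox y)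
      _ = e := by simp [measure_univ]
  obtain ⟨hγμ, hg0μ, hμe⟩ := key μ inferInstance
  obtain ⟨hγν, hg0ν, hνe⟩ := key ν inferInstance
  -- the normalized mollification
  set g : Y → ℝ := fun x => g0 x - g0 0 with hgdef
  have hgsm : ContDiff ℝ 1 g := hg0sm.sub contDiff_const
  have hgf : ∀ x, fderiv ℝ g x = fderiv ℝ g0 x := fun x => fderiv_sub_const _
  have hgsupp : ∃ s : ℝ, 0 ≤ s ∧
      tsupport (fun y => fderiv ℝ g y) ⊆ Metric.closedBall 0 s := by
    obtain ⟨r, hr⟩ := hg0cs.isBounded.subset_closedBall (0 : Y)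
    refine ⟨max r 0, le_max_right _ _, ?_⟩
    have h1 : tsupport (fun y => fderiv ℝ g y) = tsupport (fun y => fderiv ℝ g0 y) := by
      simp only [funext hgf]
    rw [h1]
    exact (tsupport_fderiv_subset ℝ).trans
      (hr.trans (Metric.closedBall_subset_closedBall (le_max_left _ _)))
  have hgmem : g ∈ ESp Y := ⟨hgsm, by simp [hgdef], hgsupp⟩
  have hgbd : ∀ y, ‖fderiv ℝ g y‖ ≤ 1 := fun y => (hgf y) ▸ hg0d y
  have hterm : ENNReal.ofReal ((∫ y, g y ∂μ) - ∫ y, g y ∂ν) ≤ dP Y μ ν :=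
    le_iSup_of_le ⟨g, hgmem, hgbd⟩ le_rfl
  have hgint : ∀ (m : Measure Y), IsProbabilityMeasure m → Integrable g0 m →
      ∫ y, g y ∂m = (∫ y, g0 y ∂m) - g0 0 := by
    intro m _ hg0i
    rw [hgdef]
    rw [integral_sub hg0i (integrable_const _)]
    simp [measure_univ]
  have hdiff : (∫ y, γ y ∂μ) - ∫ y, γ y ∂ν ≤ ((∫ y, g y ∂μ) - ∫ y, g y ∂ν) + (ε : ℝ) := by
    rw [hgint μ inferInstance hg0μ, hgint ν inferInstance hg0ν]
    have h1 := abs_le.1 hμe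
    have h2 := abs_le.1 hνe
    have : (ε : ℝ) = e + e := by rw [he]; ring
    rw [this]
    linarith
  calc ENNReal.ofReal ((∫ y, γ y ∂μ) - ∫ y, γ y ∂ν)
      ≤ ENNReal.ofReal (((∫ y, g y ∂μ) - ∫ y, g y ∂ν) + (ε : ℝ)) := ENNReal.ofReal_le_ofReal hdiff
    _ ≤ ENNReal.ofReal ((∫ y, g y ∂μ) - ∫ y, g y ∂ν) + ENNReal.ofReal (ε : ℝ) :=
        ENNReal.ofReal_add_le
    _ ≤ dP Y μ ν + ↑ε := by
        refine add_le_add hterm (le_of_eq ?_)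
        exact ENNReal.ofReal_coe_nnreal

end Aux

/-- Let `Y` be a finite-dimensional real normed vector space and
`μ, ν ∈ P(Y)`.  Then `d(μ, ν)` equals the supremum of `∫ γ dμ − ∫ γ dν` over continuous
compactly supported `γ` with `Lip γ ≤ 1`; and if both measures have finite first moment,
`d(μ, ν)` also equals the supremum over all `γ` with `γ 0 = 0` and `Lip γ ≤ 1`. -/
theorem dP_eq_sup_lipschitz
    (Y : Type*) [NormedAddCommGroup Y] [NormedSpace ℝ Y] [FiniteDimensional ℝ Y]
    [MeasurableSpace Y] [BorelSpace Y] (μ ν : ProbRadon Y) :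
    (dP Y μ.1 ν.1 =
      ⨆ γ : {γ : Y → ℝ // Continuous γ ∧ HasCompactSupport γ ∧ LipschitzWith 1 γ},
        ENNReal.ofReal ((∫ y, γ.1 y ∂μ.1) - ∫ y, γ.1 y ∂ν.1)) ∧
    (Integrable (fun y => ‖y‖) μ.1 → Integrable (fun y => ‖y‖) ν.1 →
      dP Y μ.1 ν.1 =
        ⨆ γ : {γ : Y → ℝ // γ 0 = 0 ∧ LipschitzWith 1 γ},
          ENNReal.ofReal ((∫ y, γ.1 y ∂μ.1) - ∫ y, γ.1 y ∂ν.1)) := by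
  haveI : IsProbabilityMeasure μ.1 := μ.2.1
  haveI : IsProbabilityMeasure ν.1 := ν.2.1
  have hAB : dP Y μ.1 ν.1 ≤
      ⨆ γ : {γ : Y → ℝ // Continuous γ ∧ HasCompactSupport γ ∧ LipschitzWith 1 γ},
        ENNReal.ofReal ((∫ y, γ.1 y ∂μ.1) - ∫ y, γ.1 y ∂ν.1) := by
    refine iSup_le fun γ => ?_
    obtain ⟨⟨h1, h0, s, hs, hsupp⟩, hb⟩ := γ.2
    have hlip := esp_lip h1 hb
    have habs := fun y => esp_abs_le h1 h0 hs hsupp hlip y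
    exact key_trunc hlip (integrable_of_abs_le hlip.continuous habs)
      (integrable_of_abs_le hlip.continuous habs)
  have hBA : (⨆ γ : {γ : Y → ℝ // Continuous γ ∧ HasCompactSupport γ ∧ LipschitzWith 1 γ},
      ENNReal.ofReal ((∫ y, γ.1 y ∂μ.1) - ∫ y, γ.1 y ∂ν.1)) ≤ dP Y μ.1 ν.1 :=
    iSup_le fun γ => key_moll γ.2.1 γ.2.2.1 γ.2.2.2
  have hmain := le_antisymm hAB hBA
  refine ⟨hmain, fun hm hn => ?_⟩
  refine le_antisymm ?_ ?_
  · refine iSup_le fun γ => ?_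
    obtain ⟨⟨hc1, hc0, _⟩, hb⟩ := γ.2
    exact le_iSup_of_le ⟨γ.1, hc0, esp_lip hc1 hb⟩ le_rfl
  · rw [hmain]
    refine iSup_le fun γ => ?_
    obtain ⟨h0, hlip⟩ := γ.2
    have hint : ∀ (m : Measure Y), Integrable (fun y => ‖y‖) m → Integrable γ.1 m := by
      intro m hmom
      refine hmom.mono' hlip.continuous.aestronglyMeasurable
        (Filter.Eventually.of_forall fun y => ?_)
      have := hlip.dist_le_mul y 0
      simpa [h0, Real.dist_eq, Real.norm_eq_abs, dist_zero_right] using this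
    exact key_trunc hlip (hint _ hm) (hint _ hn)

end
end

section
/- Let Y be a finite-dimensional real normed vector space and 0 ≤ s < ∞. If a sequence μ_i in P(Y) converges weakly to μ ∈ P(Y), then sup{|∫ γ dμ_i − ∫ γ dμ| : γ ∈ E_s(Y), sup_y ‖Dγ(y)‖ ≤ 1} → 0 as i → ∞. Moreover, |∫ γ dν| ≤ s · sup_y ‖Dγ(y)‖ for every ν ∈ P(Y) and every γ ∈ E_s(Y). -/
open MeasureTheory Topology Filter

noncomputable section

/-- The weak topology on `ProbRadon Y`: the initial topology induced by the maps
`μ ↦ ∫ k dμ` corresponding to continuous functions `k : Y → ℝ` with compact support. -/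
instance (Y : Type*) [TopologicalSpace Y] [MeasurableSpace Y] :
    TopologicalSpace (ProbRadon Y) :=
  ⨅ k : {k : Y → ℝ // Continuous k ∧ HasCompactSupport k},
    TopologicalSpace.induced (fun μ : ProbRadon Y => ∫ y, k.1 y ∂μ.1) inferInstance

/-- The test function space `E_s(Y)`: continuously differentiable `γ : Y → ℝ` with
`γ 0 = 0` whose derivative has support in the closed ball `B(0, s)`. -/
def ESs (Y : Type*) [NormedAddCommGroup Y] [NormedSpace ℝ Y] (s : ℝ) : Set (Y → ℝ) :=
  {γ | ContDiff ℝ 1 γ ∧ γ 0 = 0 ∧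
    tsupport (fun y => fderiv ℝ γ y) ⊆ Metric.closedBall 0 s}

section Aux

variable {Y : Type*} [NormedAddCommGroup Y] [NormedSpace ℝ Y]

lemma zero_mem_ESs (s : ℝ) : (0 : Y → ℝ) ∈ ESs Y s := by
  refine ⟨contDiff_const, rfl, ?_⟩
  have : (fun y : Y => fderiv ℝ (0 : Y → ℝ) y) = fun _ => 0 := by
    funext y
    simp [Pi.zero_def, fderiv_const]
  rw [this]
  simp [tsupport]

lemma eval_tendsto {Y : Type*} [TopologicalSpace Y] [MeasurableSpace Y] {k : Y → ℝ}
    (hk : Continuous k) (hk2 : HasCompactSupport k) {μi : ℕ → ProbRadon Y} {μ : ProbRadon Y}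
    (h : Tendsto μi atTop (𝓝 μ)) :
    Tendsto (fun i => ∫ y, k y ∂(μi i).1) atTop (𝓝 (∫ y, k y ∂μ.1)) := by
  have hcont : Continuous fun ν : ProbRadon Y => ∫ y, k y ∂ν.1 :=
    continuous_iInf_dom (i := ⟨k, hk, hk2⟩) continuous_induced_dom
  exact (hcont.tendsto μ).comp h

lemma lipschitz_of_mem {s : ℝ} {γ : Y → ℝ} (hγ : γ ∈ ESs Y s)
    {c : ℝ} (hc : ∀ y, ‖fderiv ℝ γ y‖ ≤ c) : LipschitzWith c.toNNReal γ := by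
  have hc0 : 0 ≤ c := le_trans (norm_nonneg _) (hc 0)
  apply lipschitzWith_of_nnnorm_fderiv_le (hγ.1.differentiable one_ne_zero)
  intro x
  exact (Real.le_toNNReal_iff_coe_le hc0).2 (hc x)

lemma abs_apply_le {s : ℝ} (hs : 0 ≤ s) {γ : Y → ℝ} (hγ : γ ∈ ESs Y s)
    {c : ℝ} (hc : ∀ y, ‖fderiv ℝ γ y‖ ≤ c) (y : Y) : |γ y| ≤ s * c := by
  obtain ⟨hsm, hγ0, hsupp⟩ := hγ
  have hc0 : 0 ≤ c := le_trans (norm_nonneg _) (hc 0)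
  have hdiff : Differentiable ℝ γ := hsm.differentiable one_ne_zero
  have hlip : LipschitzWith c.toNNReal γ := lipschitz_of_mem ⟨hsm, hγ0, hsupp⟩ hc
  have hbase : ∀ z : Y, |γ z| ≤ c * ‖z‖ := by
    intro z
    have := hlip.dist_le_mul z 0
    simpa [hγ0, Real.dist_eq, Real.coe_toNNReal c hc0, dist_eq_norm] using this
  rcases le_or_gt ‖y‖ s with h | h
  · calc |γ y| ≤ c * ‖y‖ := hbase y
    _ ≤ c * s := by nlinarith
    _ = s * c := mul_comm _ _
  · have hy0 : (0:ℝ) < ‖y‖ := lt_of_le_of_lt hs h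
    have hlt1 : s / ‖y‖ < 1 := (div_lt_one hy0).2 h
    have key : ∀ a : ℝ, s / ‖y‖ < a → a ≤ 1 → γ y = γ (a • y) := by
      intro a ha ha1
      have hcont : ContinuousOn (fun t : ℝ => γ (t • y)) (Set.Icc a 1) :=
        (hsm.continuous.comp (continuous_id.smul continuous_const)).continuousOn
      have hderiv : ∀ x ∈ Set.Ico a 1,
          HasDerivWithinAt (fun t : ℝ => γ (t • y)) 0 (Set.Ici x) x := by
        intro x hx
        have hxpos : s / ‖y‖ < x := lt_of_lt_of_le ha hx.1
        have hxn : x * ‖y‖ > s := by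
          rw [div_lt_iff₀ hy0] at hxpos; linarith
        have hx0 : 0 < x := lt_of_le_of_lt (div_nonneg hs hy0.le) hxpos
        have hnot : (x • y) ∉ tsupport (fun y => fderiv ℝ γ y) := by
          intro hmem
          have := hsupp hmem
          rw [Metric.mem_closedBall, dist_zero_right, norm_smul] at this
          rw [Real.norm_eq_abs, abs_of_pos hx0] at this
          linarith
        have hzero : fderiv ℝ γ (x • y) = 0 := image_eq_zero_of_notMem_tsupport hnot
        have h1 : HasDerivAt (fun t : ℝ => t • y) y x := by
          simpa using (hasDerivAt_id x).smul_const y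
        have h2 : HasDerivAt (fun t : ℝ => γ (t • y)) (fderiv ℝ γ (x • y) y) x :=
          (hdiff (x • y)).hasFDerivAt.comp_hasDerivAt x h1
        rw [hzero] at h2
        simpa using h2.hasDerivWithinAt
      have := constant_of_has_deriv_right_zero hcont hderiv 1 (Set.mem_Icc.2 ⟨ha1, le_rfl⟩)
      simpa using this
    have hle : ∀ a : ℝ, s / ‖y‖ < a → a ≤ 1 → |γ y| ≤ c * a * ‖y‖ := by
      intro a ha ha1
      rw [key a ha ha1]
      calc |γ (a • y)| ≤ c * ‖a • y‖ := hbase _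
      _ = c * a * ‖y‖ := by
        rw [norm_smul, Real.norm_eq_abs,
          abs_of_pos (lt_of_le_of_lt (div_nonneg hs hy0.le) ha)]
        ring
    have htend : Tendsto (fun a : ℝ => c * a * ‖y‖) (𝓝[>] (s / ‖y‖))
        (𝓝 (c * (s / ‖y‖) * ‖y‖)) :=
      Tendsto.mono_left ((tendsto_id.const_mul c).mul_const ‖y‖) nhdsWithin_le_nhds
    have hev : ∀ᶠ a in 𝓝[>] (s / ‖y‖), |γ y| ≤ c * a * ‖y‖ := by
      filter_upwards [Ioo_mem_nhdsGT hlt1] with a ha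
      exact hle a ha.1 ha.2.le
    calc |γ y| ≤ c * (s / ‖y‖) * ‖y‖ := ge_of_tendsto htend hev
    _ = s * c := by field_simp

lemma integrable_of_mem [MeasurableSpace Y] [OpensMeasurableSpace Y]
    {s : ℝ} (hs : 0 ≤ s) {γ : Y → ℝ} (hγ : γ ∈ ESs Y s)
    {c : ℝ} (hc : ∀ y, ‖fderiv ℝ γ y‖ ≤ c) (ν : Measure Y) [IsFiniteMeasure ν] :
    Integrable γ ν := by
  refine ⟨(hγ.1.continuous).aestronglyMeasurable, ?_⟩
  exact HasFiniteIntegral.of_bounded (C := s * c) (ae_of_all _ fun y => by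
    simpa [Real.norm_eq_abs] using abs_apply_le hs hγ hc y)

lemma abs_integral_le [MeasurableSpace Y] [OpensMeasurableSpace Y]
    {s : ℝ} (hs : 0 ≤ s) {γ : Y → ℝ} (hγ : γ ∈ ESs Y s)
    {c : ℝ} (hc : ∀ y, ‖fderiv ℝ γ y‖ ≤ c) (ν : Measure Y) [IsProbabilityMeasure ν] :
    |∫ y, γ y ∂ν| ≤ s * c := by
  have := norm_integral_le_of_norm_le_const (μ := ν) (f := γ) (C := s * c)
    (ae_of_all _ fun y => by simpa [Real.norm_eq_abs] using abs_apply_le hs hγ hc y)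
  simpa [Real.norm_eq_abs] using this

end Aux

/-- Let `Y` be a finite-dimensional real normed vector space and
`0 ≤ s < ∞`.  If `μᵢ → μ` weakly in `P(Y)`, then
`sup {|∫ γ dμᵢ − ∫ γ dμ| : γ ∈ E_s(Y), sup ‖Dγ‖ ≤ 1} → 0`.  Moreover,
`|∫ γ dν| ≤ s ⋅ sup ‖Dγ‖` for every `ν ∈ P(Y)` and every `γ ∈ E_s(Y)`. -/
theorem weak_convergence_uniform_on_Es
    (Y : Type*) [NormedAddCommGroup Y] [NormedSpace ℝ Y] [FiniteDimensional ℝ Y]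
    [MeasurableSpace Y] [BorelSpace Y]
    (s : ℝ) (hs : 0 ≤ s) (μi : ℕ → ProbRadon Y) (μ : ProbRadon Y)
    (hconv : Tendsto μi atTop (nhds μ)) :
    Tendsto (fun i =>
        ⨆ γ : {γ : Y → ℝ // γ ∈ ESs Y s ∧ ∀ y, ‖fderiv ℝ γ y‖ ≤ 1},
          |(∫ y, γ.1 y ∂(μi i).1) - ∫ y, γ.1 y ∂μ.1|) atTop (nhds 0) ∧
    ∀ (ν : ProbRadon Y) (γ : Y → ℝ), γ ∈ ESs Y s →
      ∀ c : ℝ, (∀ y, ‖fderiv ℝ γ y‖ ≤ c) → |∫ y, γ y ∂ν.1| ≤ s * c := by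
  haveI hPμ : IsProbabilityMeasure μ.1 := μ.2.1
  haveI hPμi : ∀ i, IsProbabilityMeasure (μi i).1 := fun i => (μi i).2.1
  have hz : ∀ y : Y, ‖fderiv ℝ (0 : Y → ℝ) y‖ ≤ 1 := by
    intro y; simp [Pi.zero_def, fderiv_const]
  haveI hne : Nonempty {γ : Y → ℝ // γ ∈ ESs Y s ∧ ∀ y, ‖fderiv ℝ γ y‖ ≤ 1} :=
    ⟨⟨0, zero_mem_ESs s, hz⟩⟩
  constructor
  · -- Part 1
    rw [NormedAddCommGroup.tendsto_nhds_zero]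
    intro ε hε
    -- parameters
    set δ : ℝ := ε / 8 with hδdef
    have hδ0 : 0 < δ := by positivity
    set e : ℝ := min (ε / (8 * (s + 1))) (1 / 2) with hedef
    have he0 : 0 < e := lt_min (by positivity) (by norm_num)
    have he1 : e ≤ 1 := le_trans (min_le_right _ _) (by norm_num)
    -- inner regular compact set
    obtain ⟨K, -, hKc, hKμ⟩ := μ.2.2.innerRegular isOpen_univ (1 - ENNReal.ofReal e)
      (by
        rw [measure_univ]
        exact ENNReal.sub_lt_self ENNReal.one_ne_top one_ne_zero
          (by simpa using he0))
    have hKreal : 1 - e ≤ (μ.1 K).toReal := by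
      have h1 : ((1 : ENNReal) - ENNReal.ofReal e).toReal ≤ (μ.1 K).toReal :=
        ENNReal.toReal_mono (measure_ne_top _ _) hKμ.le
      rw [ENNReal.toReal_sub_of_le (by simpa using he1) ENNReal.one_ne_top] at h1
      simpa [ENNReal.toReal_ofReal he0.le] using h1
    -- finite subcover by balls of radius δ/2
    obtain ⟨t, -, hKt⟩ := hKc.elim_nhds_subcover (fun x => Metric.ball x (δ / 2))
      (fun x _ => Metric.ball_mem_nhds x (by positivity))
    -- bump functions
    set ψ : Y → Y → ℝ := fun x y => min (max (2 - (2 / δ) * dist y x) 0) 1 with hψdef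
    have hψcont : ∀ x, Continuous (ψ x) := fun x =>
      ((continuous_const.sub (continuous_const.mul
        (continuous_id.dist continuous_const))).max continuous_const).min continuous_const
    have hψ0 : ∀ x y, 0 ≤ ψ x y := fun x y => le_min (le_max_right _ _) (by norm_num)
    have hψ1 : ∀ x y, ψ x y ≤ 1 := fun x y => min_le_right _ _
    have hψone : ∀ x y, dist y x < δ / 2 → ψ x y = 1 := by
      intro x y hd
      have hb : 2 / δ * dist y x ≤ 1 := by
        rw [div_mul_eq_mul_div, div_le_one hδ0]; linarith
      have : (1 : ℝ) ≤ 2 - 2 / δ * dist y x := by linarith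
      simp only [hψdef]
      rw [max_eq_left (le_trans zero_le_one this), min_eq_right this]
    have hψzero : ∀ x y, δ ≤ dist y x → ψ x y = 0 := by
      intro x y hd
      have hb : (2:ℝ) ≤ 2 / δ * dist y x := by
        rw [div_mul_eq_mul_div, le_div_iff₀ hδ0]; nlinarith
      have : 2 - 2 / δ * dist y x ≤ 0 := by linarith
      simp only [hψdef]
      rw [max_eq_right this]
      norm_num
    have hψcs : ∀ x, HasCompactSupport (ψ x) := by
      intro x
      apply HasCompactSupport.intro (isCompact_closedBall x δ)
      intro y hy
      have hy' : δ < dist y x := by simpa [Metric.mem_closedBall] using hy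
      exact hψzero x y hy'.le
    set S : Y → ℝ := fun y => ∑ x ∈ t, ψ x y with hSdef
    have hScont : Continuous S := continuous_finset_sum _ fun x _ => hψcont x
    have hS0 : ∀ y, 0 ≤ S y := fun y => Finset.sum_nonneg fun x _ => hψ0 x y
    set M : Y → ℝ := fun y => max (S y) 1 with hMdef
    have hM1 : ∀ y, 1 ≤ M y := fun y => le_max_right _ _
    have hM0 : ∀ y, 0 < M y := fun y => lt_of_lt_of_le one_pos (hM1 y)
    have hMcont : Continuous M := hScont.max continuous_const
    set Φx : Y → Y → ℝ := fun x y => ψ x y / M y with hΦxdef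
    have hΦxcont : ∀ x, Continuous (Φx x) := fun x =>
      (hψcont x).div hMcont fun y => ne_of_gt (hM0 y)
    have hΦx0 : ∀ x y, 0 ≤ Φx x y := fun x y => div_nonneg (hψ0 x y) (hM0 y).le
    have hΦxψ : ∀ x y, Φx x y ≤ ψ x y := fun x y => div_le_self (hψ0 x y) (hM1 y)
    have hΦxcs : ∀ x, HasCompactSupport (Φx x) := by
      intro x
      apply HasCompactSupport.intro (isCompact_closedBall x δ)
      intro y hy
      have hy' : δ < dist y x := by simpa [Metric.mem_closedBall] using hy
      simp [hΦxdef, hψzero x y hy'.le]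
    have hΦxzero : ∀ x y, δ ≤ dist y x → Φx x y = 0 := by
      intro x y hd; simp [hΦxdef, hψzero x y hd]
    have hΦxint : ∀ (ν : Measure Y) [IsFiniteMeasure ν] (x : Y), Integrable (Φx x) ν :=
      fun ν _ x => (hΦxcont x).integrable_of_hasCompactSupport (hΦxcs x)
    set Φ : Y → ℝ := fun y => ∑ x ∈ t, Φx x y with hΦdef
    have hΦeq : ∀ y, Φ y = S y / M y := by
      intro y; simp only [hΦdef, hΦxdef, hSdef]
      rw [← Finset.sum_div]
    have hΦle1 : ∀ y, Φ y ≤ 1 := by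
      intro y
      rw [hΦeq y]
      exact div_le_one_of_le₀ (le_max_left _ _) (hM0 y).le
    have hΦ0 : ∀ y, 0 ≤ Φ y := fun y => Finset.sum_nonneg fun x _ => hΦx0 x y
    have hΦK : ∀ y ∈ K, Φ y = 1 := by
      intro y hy
      have := hKt hy
      simp only [Set.mem_iUnion] at this
      obtain ⟨x, hxt, hxy⟩ := this
      have hone : ψ x y = 1 := hψone x y (by simpa [Metric.mem_ball] using hxy)
      have hS1 : 1 ≤ S y := by
        calc (1:ℝ) = ψ x y := hone.symm
        _ ≤ S y := Finset.single_le_sum (fun x _ => hψ0 x y) hxt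
      have hMS : M y = S y := max_eq_left hS1
      rw [hΦeq y, hMS, div_self (by linarith)]
    -- the key estimate for a probability measure
    have hKey : ∀ (ν : Measure Y) [IsProbabilityMeasure ν],
        ∀ γ : Y → ℝ, γ ∈ ESs Y s → (∀ y, ‖fderiv ℝ γ y‖ ≤ 1) →
        |(∫ y, γ y ∂ν) - ∑ x ∈ t, γ x * ∫ y, Φx x y ∂ν| ≤
          δ + s * (1 - ∑ x ∈ t, ∫ y, Φx x y ∂ν) := by
      intro ν _ γ hγ hγ1
      have hγb : ∀ y, |γ y| ≤ s := by
        intro y; simpa using abs_apply_le hs hγ hγ1 y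
      have hγlip : LipschitzWith 1 γ := by
        have := lipschitz_of_mem hγ hγ1
        simpa using this
      have hγint : Integrable γ ν := integrable_of_mem hs hγ hγ1 ν
      have hsumint : Integrable (fun y => ∑ x ∈ t, γ x * Φx x y) ν :=
        integrable_finset_sum _ fun x _ => (hΦxint ν x).const_mul (γ x)
      have hΦint : Integrable Φ ν := integrable_finset_sum _ fun x _ => hΦxint ν x
      have hstep1 : (∫ y, γ y ∂ν) - ∑ x ∈ t, γ x * ∫ y, Φx x y ∂ν
          = ∫ y, (γ y - ∑ x ∈ t, γ x * Φx x y) ∂ν := by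
        rw [integral_sub hγint hsumint, integral_finset_sum _
          (fun x _ => (hΦxint ν x).const_mul (γ x))]
        simp_rw [integral_const_mul]
      rw [hstep1]
      have hptwise : ∀ y, |γ y - ∑ x ∈ t, γ x * Φx x y| ≤ δ + s * (1 - Φ y) := by
        intro y
        have hdecomp : γ y - ∑ x ∈ t, γ x * Φx x y
            = γ y * (1 - Φ y) + ∑ x ∈ t, (γ y - γ x) * Φx x y := by
          simp only [hΦdef]
          rw [mul_sub, mul_one, Finset.mul_sum]
          simp only [sub_mul]
          rw [Finset.sum_sub_distrib]
          ring
        rw [hdecomp]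
        have hΦy1 : (0:ℝ) ≤ 1 - Φ y := by linarith [hΦle1 y]
        have h1 : |γ y * (1 - Φ y)| ≤ s * (1 - Φ y) := by
          rw [abs_mul, abs_of_nonneg hΦy1]
          exact mul_le_mul_of_nonneg_right (hγb y) hΦy1
        have h2 : |∑ x ∈ t, (γ y - γ x) * Φx x y| ≤ δ := by
          calc |∑ x ∈ t, (γ y - γ x) * Φx x y| ≤ ∑ x ∈ t, |(γ y - γ x) * Φx x y| :=
            Finset.abs_sum_le_sum_abs _ _
          _ ≤ ∑ x ∈ t, δ * Φx x y := by
            apply Finset.sum_le_sum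
            intro x _
            rw [abs_mul, abs_of_nonneg (hΦx0 x y)]
            rcases lt_or_ge (dist y x) δ with hd | hd
            · apply mul_le_mul_of_nonneg_right _ (hΦx0 x y)
              have h5 := hγlip.dist_le_mul y x
              rw [Real.dist_eq, NNReal.coe_one, one_mul] at h5
              exact le_trans h5 hd.le
            · rw [hΦxzero x y hd]
              simp
          _ = δ * Φ y := by rw [hΦdef, Finset.mul_sum]
          _ ≤ δ * 1 := mul_le_mul_of_nonneg_left (hΦle1 y) hδ0.le
          _ = δ := mul_one δ
        calc |γ y * (1 - Φ y) + ∑ x ∈ t, (γ y - γ x) * Φx x y|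
            ≤ |γ y * (1 - Φ y)| + |∑ x ∈ t, (γ y - γ x) * Φx x y| := abs_add_le _ _
        _ ≤ s * (1 - Φ y) + δ := add_le_add h1 h2
        _ = δ + s * (1 - Φ y) := by ring
      have hbint : Integrable (fun y => δ + s * (1 - Φ y)) ν := by
        apply Integrable.add (integrable_const δ)
        exact ((integrable_const (1:ℝ)).sub hΦint).const_mul s
      calc |∫ y, (γ y - ∑ x ∈ t, γ x * Φx x y) ∂ν|
          ≤ ∫ y, |γ y - ∑ x ∈ t, γ x * Φx x y| ∂ν := by
            simpa [Real.norm_eq_abs] using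
              norm_integral_le_integral_norm (μ := ν)
                (fun y => γ y - ∑ x ∈ t, γ x * Φx x y)
      _ ≤ ∫ y, (δ + s * (1 - Φ y)) ∂ν := by
          apply integral_mono (hγint.sub hsumint).abs hbint
          intro y
          exact hptwise y
      _ = δ + s * (1 - ∑ x ∈ t, ∫ y, Φx x y ∂ν) := by
          have h6 : Integrable (fun y => (1:ℝ) - Φ y) ν := (integrable_const (1:ℝ)).sub hΦint
          have h7 : Integrable (fun y => s * (1 - Φ y)) ν := h6.const_mul s
          have h8 : ∫ y, Φ y ∂ν = ∑ x ∈ t, ∫ y, Φx x y ∂ν := by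
            simp only [hΦdef]
            exact integral_finset_sum _ (fun x _ => hΦxint ν x)
          rw [integral_add (integrable_const δ) h7, integral_const_mul,
            integral_sub (integrable_const (1:ℝ)) hΦint, integral_const, integral_const, h8]
          simp
    -- the lower bound for ∫ Φ dμ
    have hΦμ : 1 - e ≤ ∑ x ∈ t, ∫ y, Φx x y ∂μ.1 := by
      have hΦint : Integrable Φ μ.1 := integrable_finset_sum _ fun x _ => hΦxint μ.1 x
      have h1 : ∫ y in K, Φ y ∂μ.1 ≤ ∫ y, Φ y ∂μ.1 :=
        setIntegral_le_integral hΦint (ae_of_all _ fun y => hΦ0 y)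
      have h2 : ∫ y in K, Φ y ∂μ.1 = (μ.1 K).toReal := by
        rw [setIntegral_congr_fun hKc.isClosed.measurableSet
          (fun y hy => hΦK y hy)]
        simp
        rfl
      have h3 : ∫ y, Φ y ∂μ.1 = ∑ x ∈ t, ∫ y, Φx x y ∂μ.1 := by
        rw [hΦdef]
        exact integral_finset_sum _ fun x _ => hΦxint μ.1 x
      calc (1:ℝ) - e ≤ (μ.1 K).toReal := hKreal
      _ = ∫ y in K, Φ y ∂μ.1 := h2.symm
      _ ≤ ∫ y, Φ y ∂μ.1 := h1
      _ = _ := h3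
    -- the eventual bound
    set A : ℕ → ℝ := fun i => ∑ x ∈ t, |(∫ y, Φx x y ∂(μi i).1) - ∫ y, Φx x y ∂μ.1|
      with hAdef
    set C : ℕ → ℝ := fun i => ∑ x ∈ t, ∫ y, Φx x y ∂(μi i).1 with hCdef
    set Cμ : ℝ := ∑ x ∈ t, ∫ y, Φx x y ∂μ.1 with hCμdef
    have htendA : Tendsto A atTop (𝓝 0) := by
      have h : Tendsto A atTop (𝓝 (∑ x ∈ t, (0:ℝ))) := by
        apply tendsto_finset_sum
        intro x _
        have h1 := eval_tendsto (hΦxcont x) (hΦxcs x) hconv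
        have h2 := h1.sub (tendsto_const_nhds (x := ∫ y, Φx x y ∂μ.1))
        rw [sub_self] at h2
        simpa using h2.abs
      simpa using h
    have htendC : Tendsto C atTop (𝓝 Cμ) := by
      apply tendsto_finset_sum
      intro x _
      exact eval_tendsto (hΦxcont x) (hΦxcs x) hconv
    have htendB : Tendsto (fun i => 2 * δ + s * (1 - C i) + s * (1 - Cμ) + s * A i)
        atTop (𝓝 (2 * δ + s * (1 - Cμ) + s * (1 - Cμ) + s * 0)) :=
      (((tendsto_const_nhds.add ((tendsto_const_nhds.sub htendC).const_mul s)).add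
        tendsto_const_nhds).add (htendA.const_mul s))
    have hlim_lt : 2 * δ + s * (1 - Cμ) + s * (1 - Cμ) + s * 0 < ε := by
      have h1 : 1 - Cμ ≤ e := by linarith [hΦμ]
      have h2 : s * (1 - Cμ) ≤ s * e := mul_le_mul_of_nonneg_left h1 hs
      have h3 : e ≤ ε / (8 * (s + 1)) := min_le_left _ _
      have h4 : e * (8 * (s + 1)) ≤ ε := by
        rw [← le_div_iff₀ (by positivity)]
        exact h3
      nlinarith [mul_nonneg hs he0.le, hδdef.le, hδdef.ge]
    have hBev : ∀ᶠ i in atTop, 2 * δ + s * (1 - C i) + s * (1 - Cμ) + s * A i < ε :=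
      htendB.eventually_lt_const hlim_lt
    filter_upwards [hBev] with i hBi
    have hsup_le : (⨆ γ : {γ : Y → ℝ // γ ∈ ESs Y s ∧ ∀ y, ‖fderiv ℝ γ y‖ ≤ 1},
        |(∫ y, γ.1 y ∂(μi i).1) - ∫ y, γ.1 y ∂μ.1|) ≤
        2 * δ + s * (1 - C i) + s * (1 - Cμ) + s * A i := by
      apply ciSup_le
      intro γ
      obtain ⟨γ, hγmem, hγ1⟩ := γ
      have e1 := hKey (μi i).1 γ hγmem hγ1
      have e2 := hKey μ.1 γ hγmem hγ1
      have hγb : ∀ x, |γ x| ≤ s := fun x => by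
        simpa using abs_apply_le hs hγmem hγ1 x
      have e3 : |∑ x ∈ t, γ x * (∫ y, Φx x y ∂(μi i).1)
          - ∑ x ∈ t, γ x * ∫ y, Φx x y ∂μ.1| ≤ s * A i := by
        rw [← Finset.sum_sub_distrib]
        calc |∑ x ∈ t, (γ x * (∫ y, Φx x y ∂(μi i).1) - γ x * ∫ y, Φx x y ∂μ.1)|
            ≤ ∑ x ∈ t, |γ x * (∫ y, Φx x y ∂(μi i).1) - γ x * ∫ y, Φx x y ∂μ.1| :=
              Finset.abs_sum_le_sum_abs _ _
        _ ≤ ∑ x ∈ t, s * |(∫ y, Φx x y ∂(μi i).1) - ∫ y, Φx x y ∂μ.1| := by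
            apply Finset.sum_le_sum
            intro x _
            rw [← mul_sub, abs_mul]
            exact mul_le_mul_of_nonneg_right (hγb x) (abs_nonneg _)
        _ = s * A i := by rw [hAdef, Finset.mul_sum]
      have habc : |(∫ y, γ y ∂(μi i).1) - ∫ y, γ y ∂μ.1| ≤
          (δ + s * (1 - C i)) + s * A i + (δ + s * (1 - Cμ)) := by
        calc |(∫ y, γ y ∂(μi i).1) - ∫ y, γ y ∂μ.1|
            = |((∫ y, γ y ∂(μi i).1) - ∑ x ∈ t, γ x * ∫ y, Φx x y ∂(μi i).1)
              + ((∑ x ∈ t, γ x * ∫ y, Φx x y ∂(μi i).1)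
                - ∑ x ∈ t, γ x * ∫ y, Φx x y ∂μ.1)
              + ((∑ x ∈ t, γ x * ∫ y, Φx x y ∂μ.1) - ∫ y, γ y ∂μ.1)| := by
              congr 1
              ring
        _ ≤ |(∫ y, γ y ∂(μi i).1) - ∑ x ∈ t, γ x * ∫ y, Φx x y ∂(μi i).1|
              + |(∑ x ∈ t, γ x * ∫ y, Φx x y ∂(μi i).1)
                - ∑ x ∈ t, γ x * ∫ y, Φx x y ∂μ.1|
              + |(∑ x ∈ t, γ x * ∫ y, Φx x y ∂μ.1) - ∫ y, γ y ∂μ.1| :=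
            abs_add_three _ _ _
        _ ≤ (δ + s * (1 - C i)) + s * A i + (δ + s * (1 - Cμ)) := by
            apply add_le_add (add_le_add _ e3) _
            · exact e1
            · rw [abs_sub_comm]; exact e2
      calc |(∫ y, γ y ∂(μi i).1) - ∫ y, γ y ∂μ.1|
          ≤ (δ + s * (1 - C i)) + s * A i + (δ + s * (1 - Cμ)) := habc
      _ = 2 * δ + s * (1 - C i) + s * (1 - Cμ) + s * A i := by ring
    have hsup_nonneg : 0 ≤ (⨆ γ : {γ : Y → ℝ // γ ∈ ESs Y s ∧ ∀ y, ‖fderiv ℝ γ y‖ ≤ 1},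
        |(∫ y, γ.1 y ∂(μi i).1) - ∫ y, γ.1 y ∂μ.1|) :=
      Real.iSup_nonneg fun γ => abs_nonneg _
    rw [Real.norm_eq_abs, abs_of_nonneg hsup_nonneg]
    exact lt_of_le_of_lt hsup_le hBi
  · -- Part 2
    intro ν γ hγ c hc
    haveI : IsProbabilityMeasure ν.1 := ν.2.1
    exact abs_integral_le hs hγ hc ν.1


end
end
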